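/- Consider the space X = Σ × ℤ/2ℤ from the odometer construction. The subgroup G of Homeo(X) generated by S = {T} ∪ ⋃_{n≥1} { f_ω : ω ∈ {0,1}^{1,…,n} } is countable but not finitely generated. -/
import Mathlib


noncomputable section

/-- The group of self-homeomorphisms of a topological space,
with `(f * g) x = f (g x)`. -/
instance homeoGroup (X : Type*) [TopologicalSpace X] : Group (X ≃ₜ X) where
  mul f g := g.trans f
  one := Homeomorph.refl X
  inv := Homeomorph.symm
  mul_assoc f g h := rfl
  one_mul f := rfl
  mul_one f := rfl
  inv_mul_cancel f := Homeomorph.ext fun x => f.symm_apply_apply x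

instance : TopologicalSpace (ZMod 2) := ⊥
instance : DiscreteTopology (ZMod 2) := ⟨rfl⟩

/-- The dyadic odometer map `ξ ↦ ξ + (1,0,0,⋯)` (addition with carry) on
`Σ = {0,1}^{ℤ₊}`, realized on `ℕ → Bool`: the `i`-th digit is flipped exactly
when all earlier digits equal `1`. -/
def odoT0 : (ℕ → Bool) → (ℕ → Bool) := fun ξ i =>
  if ∀ j < i, ξ j = true then !(ξ i) else ξ i

/-- The space `X = Σ × ℤ/2ℤ` of the counterexample. -/
abbrev OdoX : Type := (ℕ → Bool) × ZMod 2

open scoped Classical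

/-- The metric `d₁(ξ,η) = 1/n`, `n = min{ i ∈ ℤ₊ : ξ_i ≠ η_i }` (coordinates are
indexed by `ℤ₊ = {1,2,…}`, i.e. ℕ-index `i` corresponds to coordinate `i+1`). -/
def odoD1 (ξ η : ℕ → Bool) : ℝ :=
  if h : ∃ i, ξ i ≠ η i then ((Nat.find h : ℝ) + 1)⁻¹ else 0

/-- The metric `d((ξ,a),(η,b)) = d₁(ξ,η) + θ(a,b)` on `X = Σ × ℤ/2ℤ`,
where `θ` is the discrete metric on `ℤ/2ℤ`. -/
def odoD (p q : OdoX) : ℝ := odoD1 p.1 q.1 + (if p.2 = q.2 then 0 else 1)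

/-- The map `T(ξ,a) = (T₀ ξ, a)`. -/
def odoTmap : OdoX → OdoX := fun p => (odoT0 p.1, p.2)

/-- For `ω ∈ {0,1}^{1,…,n}`, the map `f_ω(ξ,a) = (ξ, a+1̄)` if the first `n`
digits of `ξ` form the word `ω`, and `f_ω(ξ,a) = (ξ,a)` otherwise. -/
def odoFmap (n : ℕ) (ω : Fin n → Bool) : OdoX → OdoX := fun p =>
  if ∀ i : Fin n, p.1 (i : ℕ) = ω i then (p.1, p.2 + 1) else p

/-- The generating set `S = {T} ∪ ⋃_{n ≥ 1} { f_ω : ω ∈ {0,1}^{1,…,n} }`,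
as a set of homeomorphisms of `X`. -/
def odoS : Set (OdoX ≃ₜ OdoX) :=
  {h | (∀ p, h p = odoTmap p) ∨
    ∃ n : ℕ, 0 < n ∧ ∃ ω : Fin n → Bool, ∀ p, h p = odoFmap n ω p}

/-! ### Auxiliary material -/

section Aux

@[simp] lemma homeo_mul_apply (a b : OdoX ≃ₜ OdoX) (p : OdoX) : (a * b) p = a (b p) := rfl
@[simp] lemma homeo_one_apply (p : OdoX) : (1 : OdoX ≃ₜ OdoX) p = p := rfl
@[simp] lemma homeo_inv_apply (a : OdoX ≃ₜ OdoX) (p : OdoX) : a⁻¹ p = a.symm p := rfl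

/-- Agreement of two sequences on the first `N` coordinates. -/
def agreeUpTo (N : ℕ) (ξ η : ℕ → Bool) : Prop := ∀ i < N, ξ i = η i

/-- The defining condition of the subgroup `odoH N`. -/
def odoCond (N : ℕ) (g : OdoX ≃ₜ OdoX) : Prop :=
  ∀ p q : OdoX, agreeUpTo N p.1 q.1 →
    agreeUpTo N (g p).1 (g q).1 ∧ (g p).2 - p.2 = (g q).2 - q.2

lemma odoCond_inv {N : ℕ} {g : OdoX ≃ₜ OdoX} (hg : odoCond N g) : odoCond N g⁻¹ := by
  classical
  set π : OdoX → (Fin N → Bool) × ZMod 2 := fun p => (fun i => p.1 (i : ℕ), p.2) with hπ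
  set emb : (Fin N → Bool) × ZMod 2 → OdoX :=
    fun x => (fun i => if h : i < N then x.1 ⟨i, h⟩ else false, x.2) with hemb
  have hπemb : ∀ x, π (emb x) = x := by
    rintro ⟨w, a⟩
    refine Prod.ext (funext fun i => ?_) rfl
    simp [hπ, hemb, i.isLt]
  have hkeyπ : ∀ p q : OdoX, π p = π q → π (g p) = π (g q) := by
    intro p q hpq
    have h1 : agreeUpTo N p.1 q.1 := fun i hi =>
      congrFun (congrArg Prod.fst hpq) ⟨i, hi⟩
    have h2 : p.2 = q.2 := by
      have h2' := congrArg Prod.snd hpq; exact h2'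
    obtain ⟨ha, hb⟩ := hg p q h1
    refine Prod.ext (funext fun i => ha i i.isLt) ?_
    have : (g p).2 - p.2 = (g q).2 - q.2 := hb
    simpa [h2, sub_left_inj] using this
  set gh : (Fin N → Bool) × ZMod 2 → (Fin N → Bool) × ZMod 2 :=
    fun x => π (g (emb x)) with hgh
  have hkey : ∀ p : OdoX, π (g p) = gh (π p) := fun p =>
    hkeyπ p (emb (π p)) (hπemb (π p)).symm
  have hsurj : Function.Surjective gh := by
    intro y
    refine ⟨π (g.symm (emb y)), ?_⟩
    rw [← hkey, Homeomorph.apply_symm_apply, hπemb]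
  have hinj : Function.Injective gh := Finite.injective_iff_surjective.mpr hsurj
  have hshift : ∀ x t, gh (x.1, x.2 + t) = ((gh x).1, (gh x).2 + t) := by
    rintro ⟨w, a⟩ t
    set p : OdoX := emb (w, a) with hp
    set q : OdoX := (p.1, p.2 + t) with hq
    have hagree : agreeUpTo N p.1 q.1 := fun i _ => rfl
    obtain ⟨ha, hb⟩ := hg p q hagree
    have hq2 : (g q).2 = (g p).2 + t := by
      have : (g p).2 - p.2 = (g q).2 - (p.2 + t) := hb
      linear_combination -this
    have hembq : emb (w, a + t) = q := by
      refine Prod.ext rfl ?_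
      simp [hq, hp, hemb]
    calc gh (w, a + t) = π (g q) := by rw [hgh]
      _ = ((gh (w, a)).1, (gh (w, a)).2 + t) := by
          refine Prod.ext (funext fun i => ?_) ?_
          · exact (ha i i.isLt).symm
          · simpa [hπ, hgh, hp] using hq2
  intro p q hpq
  set t : ZMod 2 := q.2 - p.2 with ht
  have e1 : gh (π (g.symm q)) = π q := by
    rw [← hkey, Homeomorph.apply_symm_apply]
  have e2 : gh ((π (g.symm p)).1, (π (g.symm p)).2 + t) = π q := by
    rw [hshift, ← hkey, Homeomorph.apply_symm_apply]
    refine Prod.ext (funext fun i => hpq i i.isLt) ?_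
    show p.2 + t = q.2
    rw [ht]; ring
  have e3 : π (g.symm q) = ((π (g.symm p)).1, (π (g.symm p)).2 + t) :=
    hinj (by rw [e1, e2])
  constructor
  · intro i hi
    have := congrFun (congrArg Prod.fst e3) ⟨i, hi⟩
    simpa [hπ] using this.symm ▸ this
  · have h2 : (g.symm q).2 = (g.symm p).2 + t := congrArg Prod.snd e3
    show (g.symm p).2 - p.2 = (g.symm q).2 - q.2
    rw [h2, ht]; ring

/-- The subgroup of homeomorphisms compatible with the first `N` coordinates. -/
def odoH (N : ℕ) : Subgroup (OdoX ≃ₜ OdoX) where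
  carrier := {g | odoCond N g}
  one_mem' := fun p q h => ⟨h, by simp⟩
  mul_mem' := by
    intro a b ha hb p q h
    obtain ⟨h1, h2⟩ := hb p q h
    obtain ⟨h3, h4⟩ := ha (b p) (b q) h1
    exact ⟨h3, by show (a (b p)).2 - p.2 = (a (b q)).2 - q.2; linear_combination h2 + h4⟩
  inv_mem' := fun h => odoCond_inv h

lemma mem_odoH {N : ℕ} {g : OdoX ≃ₜ OdoX} : g ∈ odoH N ↔ odoCond N g := Iff.rfl

/-- The intersection of the `odoH M` over `M ≥ N`; these form an increasing chain. -/
def odoHC (N : ℕ) : Subgroup (OdoX ≃ₜ OdoX) := ⨅ (M : ℕ) (_ : N ≤ M), odoH M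

lemma mem_odoHC {N : ℕ} {g : OdoX ≃ₜ OdoX} :
    g ∈ odoHC N ↔ ∀ M, N ≤ M → g ∈ odoH M := by
  simp [odoHC, Subgroup.mem_iInf]

lemma odoHC_mono {N N' : ℕ} (h : N ≤ N') : odoHC N ≤ odoHC N' := by
  intro g hg
  rw [mem_odoHC] at hg ⊢
  exact fun M hM => hg M (h.trans hM)

lemma odoHC_le_odoH (N : ℕ) : odoHC N ≤ odoH N := fun g hg => mem_odoHC.mp hg N le_rfl

lemma odoT0_agree {M : ℕ} {ξ η : ℕ → Bool} (h : agreeUpTo M ξ η) :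
    agreeUpTo M (odoT0 ξ) (odoT0 η) := by
  intro i hi
  have hc : (∀ j < i, ξ j = true) ↔ (∀ j < i, η j = true) :=
    forall₂_congr fun j hj => by rw [h j (hj.trans hi)]
  by_cases hp : ∀ j < i, ξ j = true
  · simp only [odoT0, if_pos hp, if_pos (hc.mp hp), h i hi]
  · simp only [odoT0, if_neg hp, if_neg (fun hq => hp (hc.mpr hq)), h i hi]

lemma odoFmap_fst (n : ℕ) (ω : Fin n → Bool) (p : OdoX) : (odoFmap n ω p).1 = p.1 := by
  unfold odoFmap; split_ifs <;> rfl

lemma gens_mem : ∀ s ∈ odoS, ∃ N, s ∈ odoHC N := by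
  rintro s (hs | ⟨n, -, ω, hs⟩)
  · refine ⟨0, mem_odoHC.mpr fun M _ p q h => ?_⟩
    rw [hs p, hs q]
    exact ⟨odoT0_agree h, by simp [odoTmap]⟩
  · refine ⟨n, mem_odoHC.mpr fun M hM p q h => ?_⟩
    rw [hs p, hs q]
    constructor
    · rw [odoFmap_fst, odoFmap_fst]; exact h
    · have hcond : (∀ i : Fin n, p.1 (i : ℕ) = ω i) ↔ (∀ i : Fin n, q.1 (i : ℕ) = ω i) :=
        forall_congr' fun i => by rw [h i (lt_of_lt_of_le i.isLt hM)]
      unfold odoFmap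
      by_cases hp : ∀ i : Fin n, p.1 (i : ℕ) = ω i
      · rw [if_pos hp, if_pos (hcond.mp hp)]; ring
      · rw [if_neg hp, if_neg (fun hq => hp (hcond.mpr hq))]; simp

lemma odoFmap_invol (n : ℕ) (ω : Fin n → Bool) (p : OdoX) :
    odoFmap n ω (odoFmap n ω p) = p := by
  by_cases h : ∀ i : Fin n, p.1 (i : ℕ) = ω i
  · have h11 : (1 + 1 : ZMod 2) = 0 := rfl
    simp only [odoFmap, if_pos h]
    refine Prod.ext rfl ?_
    show p.2 + 1 + 1 = p.2
    rw [add_assoc, h11, add_zero]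
  · simp only [odoFmap, if_neg h]

lemma odoFmap_continuous (n : ℕ) (ω : Fin n → Bool) : Continuous (odoFmap n ω) := by
  classical
  have hclopen : IsClopen {p : OdoX | ∀ i : Fin n, p.1 (i : ℕ) = ω i} := by
    have : {p : OdoX | ∀ i : Fin n, p.1 (i : ℕ) = ω i}
        = ⋂ i : Fin n, (fun p : OdoX => p.1 (i : ℕ)) ⁻¹' {ω i} := by
      ext p; simp [Set.mem_iInter]
    rw [this]
    have hev : ∀ i : Fin n, Continuous fun p : OdoX => p.1 (i : ℕ) :=
      fun i => (continuous_apply (i : ℕ)).comp continuous_fst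
    constructor
    · exact isClosed_iInter fun i => (isClosed_discrete _).preimage (hev i)
    · exact isOpen_iInter_of_finite fun i => (isOpen_discrete _).preimage (hev i)
  have hfr : ∀ p ∈ frontier {p : OdoX | ∀ i : Fin n, p.1 (i : ℕ) = ω i},
      ((p.1, p.2 + 1) : OdoX) = p := by
    rw [hclopen.frontier_eq]; intro p hp; exact absurd hp (Set.notMem_empty p)
  have hf : Continuous fun p : OdoX => ((p.1, p.2 + 1) : OdoX) :=
    continuous_fst.prodMk
      ((continuous_of_discreteTopology (f := fun a : ZMod 2 => a + 1)).comp continuous_snd)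
  unfold odoFmap
  exact Continuous.if hfr hf continuous_id

/-- The homeomorphism with underlying map `odoFmap n ω`. -/
def odoFHomeo (n : ℕ) (ω : Fin n → Bool) : OdoX ≃ₜ OdoX where
  toFun := odoFmap n ω
  invFun := odoFmap n ω
  left_inv := odoFmap_invol n ω
  right_inv := odoFmap_invol n ω
  continuous_toFun := odoFmap_continuous n ω
  continuous_invFun := odoFmap_continuous n ω

lemma odoFHomeo_mem_odoS (n : ℕ) (hn : 0 < n) (ω : Fin n → Bool) :
    odoFHomeo n ω ∈ odoS :=
  Or.inr ⟨n, hn, ω, fun _ => rfl⟩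

lemma odoFHomeo_notMem_odoH (N : ℕ) :
    odoFHomeo (N + 1) (fun _ => true) ∉ odoH N := by
  classical
  intro h
  set ξ : ℕ → Bool := fun _ => true with hξ
  set η : ℕ → Bool := fun i => if i = N then false else true with hη
  have hagree : agreeUpTo N ξ η := by
    intro i hi
    simp [hξ, hη, Nat.ne_of_lt hi]
  obtain ⟨-, hb⟩ := h (ξ, 0) (η, 0) hagree
  have hpcond : ∀ i : Fin (N + 1), ξ (i : ℕ) = (fun _ : Fin (N+1) => true) i :=
    fun i => rfl
  have hqcond : ¬ ∀ i : Fin (N + 1), η (i : ℕ) = (fun _ : Fin (N+1) => true) i := by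
    intro hq
    have := hq ⟨N, Nat.lt_succ_self N⟩
    simp [hη] at this
  have hp : (odoFHomeo (N + 1) (fun _ => true) (ξ, 0)).2 = 1 := by
    show (odoFmap (N + 1) (fun _ => true) (ξ, 0)).2 = 1
    rw [odoFmap, if_pos hpcond]
    show (0 : ZMod 2) + 1 = 1
    rw [zero_add]
  have hq : (odoFHomeo (N + 1) (fun _ => true) (η, 0)).2 = 0 := by
    show (odoFmap (N + 1) (fun _ => true) (η, 0)).2 = 0
    rw [odoFmap, if_neg hqcond]
  rw [hp, hq] at hb
  simp at hb

/-- Coding of the generators, used for countability. -/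
def odoCode (h : OdoX ≃ₜ OdoX) : Option (Σ n : ℕ, Fin n → Bool) :=
  if h' : ∃ n : ℕ, 0 < n ∧ ∃ ω : Fin n → Bool, ∀ p, h p = odoFmap n ω p
  then some ⟨h'.choose, (h'.choose_spec.2).choose⟩ else none

lemma odoS_countable : Countable odoS := by
  classical
  have hinj : Function.Injective (fun h : odoS => odoCode h.1) := by
    rintro ⟨h₁, hh₁⟩ ⟨h₂, hh₂⟩ he
    simp only [odoCode] at he
    by_cases c₁ : ∃ n : ℕ, 0 < n ∧ ∃ ω : Fin n → Bool, ∀ p, h₁ p = odoFmap n ω p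
    · by_cases c₂ : ∃ n : ℕ, 0 < n ∧ ∃ ω : Fin n → Bool, ∀ p, h₂ p = odoFmap n ω p
      · rw [dif_pos c₁, dif_pos c₂] at he
        have hs : (⟨c₁.choose, (c₁.choose_spec.2).choose⟩ : Σ n : ℕ, Fin n → Bool)
            = ⟨c₂.choose, (c₂.choose_spec.2).choose⟩ := Option.some_injective _ he
        have e₁ := (c₁.choose_spec.2).choose_spec
        have e₂ := (c₂.choose_spec.2).choose_spec
        have hfm : odoFmap c₁.choose (c₁.choose_spec.2).choose
            = odoFmap c₂.choose (c₂.choose_spec.2).choose :=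
          congrArg (fun s : Σ n : ℕ, Fin n → Bool => odoFmap s.1 s.2) hs
        refine Subtype.ext (Homeomorph.ext fun p => (e₁ p).trans ?_)
        rw [hfm]; exact (e₂ p).symm
      · rw [dif_pos c₁, dif_neg c₂] at he; exact absurd he (by simp)
    · by_cases c₂ : ∃ n : ℕ, 0 < n ∧ ∃ ω : Fin n → Bool, ∀ p, h₂ p = odoFmap n ω p
      · rw [dif_neg c₁, dif_pos c₂] at he; exact absurd he.symm (by simp)
      · have t₁ : ∀ p, h₁ p = odoTmap p := hh₁.resolve_right c₁
        have t₂ : ∀ p, h₂ p = odoTmap p := hh₂.resolve_right c₂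
        exact Subtype.ext (Homeomorph.ext fun p => (t₁ p).trans (t₂ p).symm)
  exact hinj.countable

/-- Evaluation of formal words over `odoS`. -/
def odoEval (l : List (odoS × Bool)) : OdoX ≃ₜ OdoX :=
  (l.map fun s => if s.2 then (s.1 : OdoX ≃ₜ OdoX) else (s.1 : OdoX ≃ₜ OdoX)⁻¹).prod

lemma closure_subset_range_odoEval :
    (Subgroup.closure odoS : Set (OdoX ≃ₜ OdoX)) ⊆ Set.range odoEval := by
  intro x hx
  refine Subgroup.closure_induction (k := odoS)
    (p := fun g _ => g ∈ Set.range odoEval) ?_ ?_ ?_ ?_ hx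
  · intro s hs
    exact ⟨[(⟨s, hs⟩, true)], by simp [odoEval]⟩
  · exact ⟨[], by simp [odoEval]⟩
  · rintro a b - - ⟨la, rfl⟩ ⟨lb, rfl⟩
    exact ⟨la ++ lb, by simp [odoEval]⟩
  · rintro a - ⟨l, rfl⟩
    refine ⟨l.reverse.map fun s => (s.1, !s.2), ?_⟩
    unfold odoEval
    rw [List.prod_inv_reverse, List.map_map, List.map_reverse, List.map_map]
    refine congrArg List.prod (congrArg List.reverse (List.map_congr_left ?_))
    rintro ⟨s, b⟩ -
    cases b <;> simp

end Aux

/-- the subgroup `G ≤ Homeo(X)` generated by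
`S = {T} ∪ ⋃_{n≥1} {f_ω}` is countable but not finitely generated. -/
theorem stmt_17 :
    Countable (Subgroup.closure odoS) ∧ ¬ Group.FG (Subgroup.closure odoS) := by
  constructor
  · have := odoS_countable
    have hc : (Subgroup.closure odoS : Set (OdoX ≃ₜ OdoX)).Countable :=
      (Set.countable_range odoEval).mono closure_subset_range_odoEval
    exact hc.to_subtype
  · intro hFG
    rw [Group.fg_iff_subgroup_fg] at hFG
    obtain ⟨F, hF⟩ := hFG
    have hmem : ∀ g ∈ Subgroup.closure odoS, ∃ N, g ∈ odoHC N := by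
      intro g hg
      refine Subgroup.closure_induction (p := fun g _ => ∃ N, g ∈ odoHC N) ?_ ?_ ?_ ?_ hg
      · exact gens_mem
      · exact ⟨0, one_mem _⟩
      · rintro a b - - ⟨Na, ha⟩ ⟨Nb, hb⟩
        exact ⟨max Na Nb, mul_mem (odoHC_mono (le_max_left _ _) ha)
          (odoHC_mono (le_max_right _ _) hb)⟩
      · rintro a - ⟨Na, ha⟩; exact ⟨Na, inv_mem ha⟩
    classical
    set Nf : (OdoX ≃ₜ OdoX) → ℕ :=
      fun f => if h : ∃ N, f ∈ odoHC N then h.choose else 0 with hNf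
    set N := F.sup Nf with hN
    have hFsub : (F : Set (OdoX ≃ₜ OdoX)) ⊆ odoHC N := by
      intro f hf
      have hfc : f ∈ Subgroup.closure odoS := hF ▸ Subgroup.subset_closure hf
      have h : ∃ N, f ∈ odoHC N := hmem f hfc
      have hNff : f ∈ odoHC (Nf f) := by
        rw [hNf]; simp only [dif_pos h]; exact h.choose_spec
      exact odoHC_mono (Finset.le_sup hf) hNff
    have hle : Subgroup.closure odoS ≤ odoHC N := by
      rw [← hF]; exact (Subgroup.closure_le _).mpr hFsub
    have hstar : odoFHomeo (N + 1) (fun _ => true) ∈ Subgroup.closure odoS :=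
      Subgroup.subset_closure (odoFHomeo_mem_odoS _ (Nat.succ_pos N) _)
    exact odoFHomeo_notMem_odoH N (odoHC_le_odoH N (hle hstar))
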